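/- arXiv:math/0506048 — 2 statements merged into one kernel-verified Lean document; each statement's English description precedes it below -/
import Mathlib

section
/- A ±1 sequence of length n whose periodic autocorrelation satisfies θ(t) = 0 for all t ≢ 0 (mod n) (a perfect binary sequence) must have n = 4u² for some integer u; in particular n is divisible by 4 when n > 1. -/
/-!
Summing the autocorrelations over all shifts gives `(∑ s_k)²`, so a perfect sequence has
`(∑ s_k)² = θ(0) = n`. Modulo 2 every `±1` is `1`, so `θ(1) ≡ n` and `∑ s_k ≡ n`: from `θ(1) = 0`
the length `n` is even, hence so is `∑ s_k`, and `n = (∑ s_k)²` is four times a square.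
-/

open Finset

theorem Finset.sum_range_add_mod {M : Type*} [AddCommMonoid M] (n k : ℕ) (f : ℕ → M) :
    ∑ t ∈ range n, f ((k + t) % n) = ∑ t ∈ range n, f t := by
  rcases Nat.eq_zero_or_pos n with rfl | hn
  · simp
  have : NeZero n := ⟨hn.ne'⟩
  have hshift : ∀ t : Fin n, (k + t) % n = ((Fin.ofNat n k + t : Fin n) : ℕ) := by
    simp [Fin.val_add, Nat.add_mod]
  rw [← Fin.sum_univ_eq_sum_range f, ← Fin.sum_univ_eq_sum_range (fun t ↦ f ((k + t) % n))]
  simp only [hshift]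
  exact Equiv.sum_comp (Equiv.addLeft (Fin.ofNat n k)) (fun i ↦ f i)

def autocorrelation {R : Type*} [Semiring R] (n : ℕ) (s : ℕ → R) (t : ℕ) : R :=
  ∑ k ∈ range n, s k * s ((k + t) % n)

section

variable {R : Type*}

theorem sum_autocorrelation [Semiring R] (n : ℕ) (s : ℕ → R) :
    ∑ t ∈ range n, autocorrelation n s t = (∑ k ∈ range n, s k) ^ 2 := by
  simp only [autocorrelation]
  rw [sum_comm, sq, sum_mul]
  refine sum_congr rfl fun k _ ↦ ?_
  rw [← mul_sum, sum_range_add_mod n k s]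

theorem autocorrelation_zero [Ring R] {n : ℕ} {s : ℕ → R}
    (hs : ∀ k < n, s k = 1 ∨ s k = -1) : autocorrelation n s 0 = n := by
  calc autocorrelation n s 0 = ∑ _k ∈ range n, (1 : R) := by
        refine sum_congr rfl fun k hk ↦ ?_
        rw [mem_range] at hk
        rw [add_zero, Nat.mod_eq_of_lt hk]
        rcases hs k hk with h | h <;> simp [h]
    _ = n := by simp

end

theorem intCast_sum_eq_card_of_eq_one_or_neg_one {ι : Type*} (s : Finset ι) (f : ι → ℤ)
    (hf : ∀ i ∈ s, f i = 1 ∨ f i = -1) : ((∑ i ∈ s, f i : ℤ) : ZMod 2) = #s := by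
  rw [Int.cast_sum, ← nsmul_one, ← sum_const]
  refine sum_congr rfl fun i hi ↦ ?_
  rcases hf i hi with h | h <;> simp [h]

theorem intCast_autocorrelation_eq_length {n : ℕ} (hn : 0 < n) {s : ℕ → ℤ}
    (hs : ∀ k < n, s k = 1 ∨ s k = -1) (t : ℕ) :
    ((autocorrelation n s t : ℤ) : ZMod 2) = n := by
  rw [autocorrelation, intCast_sum_eq_card_of_eq_one_or_neg_one, card_range]
  intro k hk
  rw [mem_range] at hk
  rcases hs k hk with h | h <;> rcases hs _ (Nat.mod_lt (k + t) hn) with h' | h' <;> simp [h, h']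

theorem perfect_binary_sequence_length (n : ℕ) (hn : 1 < n) (s : ℕ → ℤ)
    (hs : ∀ k < n, s k = 1 ∨ s k = -1)
    (hperf : ∀ t, 0 < t → t < n →
      ∑ k ∈ Finset.range n, s k * s ((k + t) % n) = 0) :
    (∃ u : ℕ, n = 4 * u ^ 2) ∧ 4 ∣ n := by
  have hpos : 0 < n := by omega
  have hsq : (∑ k ∈ range n, s k) ^ 2 = n := by
    rw [← sum_autocorrelation, ← autocorrelation_zero hs]
    exact sum_eq_single_of_mem (f := autocorrelation n s) 0 (mem_range.2 hpos)
      fun t ht ht0 ↦ hperf t (Nat.pos_of_ne_zero ht0) (mem_range.1 ht)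
  have hn_even : (n : ZMod 2) = 0 := by
    rw [← intCast_autocorrelation_eq_length hpos hs 1, autocorrelation, hperf 1 one_pos hn,
      Int.cast_zero]
  obtain ⟨m, hm⟩ : (2 : ℤ) ∣ ∑ k ∈ range n, s k := by
    refine (ZMod.intCast_zmod_eq_zero_iff_dvd _ 2).1 ?_
    rw [intCast_sum_eq_card_of_eq_one_or_neg_one _ _ fun k hk ↦ hs k (mem_range.1 hk), card_range,
      hn_even]
  have hn4 : n = 4 * m.natAbs ^ 2 := by
    zify
    rw [← hsq, hm, sq_abs]
    ring
  exact ⟨⟨m.natAbs, hn4⟩, hn4 ▸ dvd_mul_right 4 _⟩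
end

section
/- For odd n, the sequence s_k = e^{iπk(k+1)/n}, k = 0,...,n-1, is a perfect sequence: its periodic autocorrelation satisfies θ(t) = Σ_{k=0}^{n-1} s_k · conj(s_{(k+t) mod n}) = 0 for all t ≢ 0 (mod n). -/
open Finset Complex
open scoped Real ComplexConjugate

/-!
Since `(k + t)(k + t + 1) = k(k + 1) + t(t + 1) + 2kt`, the chirp `s_k = chirp n k`
satisfies `s_{k+t} = s_k s_t ζ^{kt}` with `ζ = e^{2πi/n}`. As `|s_k| = 1`, the autocorrelation at shift `t`
is `conj (s_t)` times the conjugate of the geometric sum `∑_{k<n} (ζ^t)^k`, which vanishes because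
`ζ^t` is an `n`-th root of unity different from `1` for `0 < t < n`.
-/

theorem geom_sum_eq_zero_of_pow_eq_one {R : Type*} [CommRing R] [IsDomain R] {ω : R} {n : ℕ}
    (hω : ω ≠ 1) (hωn : ω ^ n = 1) : ∑ k ∈ range n, ω ^ k = 0 := by
  have h := geom_sum_mul ω n
  rw [hωn, sub_self] at h
  exact (mul_eq_zero.1 h).resolve_right (sub_ne_zero.2 hω)

noncomputable def chirp (n : ℕ) (x : ℂ) : ℂ :=
  exp (π * I * x * (x + 1) / n)

theorem chirp_add (n : ℕ) (x y : ℂ) :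
    chirp n (x + y) = chirp n x * chirp n y * exp (2 * π * I * x * y / n) := by
  simp only [chirp, ← exp_add]
  congr 1
  ring

theorem chirp_mul_conj_self (n : ℕ) (x : ℝ) : chirp n x * conj (chirp n x) = 1 := by
  rw [chirp, ← exp_conj, ← exp_add]
  simp only [map_div₀, map_mul, map_add, conj_ofReal, conj_I, map_one, map_natCast]
  convert exp_zero using 2
  ring

theorem turyn_perfect_sequence_general (n : ℕ) :
    ∀ t : ℕ, 0 < t → t < n →
      ∑ k ∈ Finset.range n,
          Complex.exp (Real.pi * Complex.I * k * (k + 1) / n) *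
            (starRingEnd ℂ) (Complex.exp (Real.pi * Complex.I * (k + t) * (k + t + 1) / n)) = 0 := by
  intro t ht htn
  set ζ := exp (2 * π * I / n)
  have hζ : IsPrimitiveRoot ζ n := isPrimitiveRoot_exp n (by omega)
  have hterm (k : ℕ) :
      chirp n k * conj (chirp n (k + t)) = conj (chirp n t) * conj ((ζ ^ t) ^ k) := by
    have hshift : exp (2 * π * I * k * t / n) = (ζ ^ t) ^ k := by
      rw [← exp_nat_mul, ← exp_nat_mul]
      congr 1
      ring
    have hunit : chirp n k * conj (chirp n k) = 1 := mod_cast chirp_mul_conj_self n k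
    rw [chirp_add, hshift, map_mul, map_mul, ← mul_assoc, ← mul_assoc, hunit, one_mul]
  calc _ = ∑ k ∈ range n, conj (chirp n t) * conj ((ζ ^ t) ^ k) :=
        sum_congr rfl fun k _ => hterm k
    _ = conj (chirp n t * ∑ k ∈ range n, (ζ ^ t) ^ k) := by rw [map_mul, map_sum, mul_sum]
    _ = 0 := by
      have hωn : (ζ ^ t) ^ n = 1 := by rw [pow_right_comm, hζ.pow_eq_one, one_pow]
      rw [geom_sum_eq_zero_of_pow_eq_one (hζ.pow_ne_one_of_pos_of_lt ht.ne' htn) hωn, mul_zero,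
        map_zero]

theorem turyn_perfect_sequence (n : ℕ) (hn : 0 < n) (hodd : Odd n) :
    ∀ t : ℕ, 0 < t → t < n →
      ∑ k ∈ Finset.range n,
          Complex.exp (Real.pi * Complex.I * k * (k + 1) / n) *
            (starRingEnd ℂ) (Complex.exp (Real.pi * Complex.I * (k + t) * (k + t + 1) / n)) = 0 :=
  turyn_perfect_sequence_general n
end
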